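/- Let E ∈ ℝ² with E ≠ 0, let R, X ∈ ℝ with R ≠ 0 and X ≠ 0, let Imax > 0, and let M₁ ≠ M₂ be two distinct matrices from {M_P, M_Q, M_V}. For every W ∈ 𝒲 there exists W' ∈ 𝒲 with rank(W') ≤ 1 such that Tr(M₁ W') = Tr(M₁ W), Tr(M₂ W') = Tr(M₂ W), and Tr(W') ≤ Tr(W). -/

import Mathlib

/-- The matrix `J` with rows `(0,1)` and `(-1,0)`. -/
def Jmat : Matrix (Fin 2) (Fin 2) ℝ := !![0, 1; -1, 0]

/-- The impedance matrix `Z` with rows `(R,-X)` and `(X,R)`. -/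
def Zmat (R X : ℝ) : Matrix (Fin 2) (Fin 2) ℝ := !![R, -X; X, R]

/-- Interpret a plain vector `Fin 2 → ℝ` as an element of Euclidean space `ℝ²`. -/
noncomputable def toE (v : Fin 2 → ℝ) : EuclideanSpace ℝ (Fin 2) := WithLp.toLp 2 v

/-- The vector `J E ∈ ℝ²`. -/
noncomputable def Jv (E : EuclideanSpace ℝ (Fin 2)) : EuclideanSpace ℝ (Fin 2) :=
  toE (Jmat.mulVec (fun i => E i))

/-- The vector `Zᵀ E ∈ ℝ²`. -/
noncomputable def ZtE (R X : ℝ) (E : EuclideanSpace ℝ (Fin 2)) : EuclideanSpace ℝ (Fin 2) :=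
  toE ((Zmat R X).transpose.mulVec (fun i => E i))

/-- `M(α, a, ζ)`: the 3×3 symmetric matrix with top-left 2×2 block `α·I₂`,
top-right column `a/2`, bottom-left row `aᵀ/2`, and bottom-right entry `ζ`. -/
noncomputable def Mmat (α : ℝ) (a : EuclideanSpace ℝ (Fin 2)) (ζ : ℝ) :
    Matrix (Fin 3) (Fin 3) ℝ :=
  !![α, 0, a 0 / 2; 0, α, a 1 / 2; a 0 / 2, a 1 / 2, ζ]

/-- `M_P := M(3R/2, (3/2)E, 0)`. -/
noncomputable def MP (E : EuclideanSpace ℝ (Fin 2)) (R : ℝ) : Matrix (Fin 3) (Fin 3) ℝ :=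
  Mmat (3 * R / 2) ((3 / 2 : ℝ) • E) 0

/-- `M_Q := M(3X/2, (3/2)JE, 0)`. -/
noncomputable def MQ (E : EuclideanSpace ℝ (Fin 2)) (X : ℝ) : Matrix (Fin 3) (Fin 3) ℝ :=
  Mmat (3 * X / 2) ((3 / 2 : ℝ) • Jv E) 0

/-- `M_V := M(R² + X², 2ZᵀE, ‖E‖²)`. -/
noncomputable def MV (E : EuclideanSpace ℝ (Fin 2)) (R X : ℝ) : Matrix (Fin 3) (Fin 3) ℝ :=
  Mmat (R ^ 2 + X ^ 2) ((2 : ℝ) • ZtE R X E) (‖E‖ ^ 2)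

/-- The SDP feasible set `𝒲`. -/
def Wset (Imax : ℝ) : Set (Matrix (Fin 3) (Fin 3) ℝ) :=
  {W | W.PosSemidef ∧ W 0 0 + W 1 1 ≤ Imax ^ 2 ∧ W 2 2 = 1}

/-!
For `M = M(α, a, ζ)` and a symmetric `W` with `W₂₂ = 1`, `Tr(M W) = α t + ⟪a, w⟫ + ζ`, where
`t = W₀₀ + W₁₁` and `w = (W₀₂, W₁₂)`. Any two of `(3/2)E`, `(3/2)JE`, `2ZᵀE` are linearly
independent (their cross products are `-(9/4)‖E‖²`, `-3X‖E‖²`, `3R‖E‖²`), so there is `c` with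
`⟪aᵢ, c⟫ = αᵢ` for both outputs, and replacing `(t, w)` by `(s, w + (t - s) c)` preserves both traces.
Positive semidefiniteness gives `‖w‖² ≤ t`, so by the intermediate value theorem some `s ∈ [0, t]`
satisfies `‖u‖² = s` for `u = w + (t - s) c`; then `W' = [u; 1][u; 1]ᵀ` is feasible, has rank one
and trace `s + 1 ≤ t + 1`.
-/

open Matrix Set
open scoped RealInnerProductSpace

theorem Matrix.PosSemidef.mul_self_apply_le {n : Type*} {A : Matrix n n ℝ} (hA : A.PosSemidef)
    (i j : n) : A i j * A i j ≤ A i i * A j j := by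
  classical
  have hdet := (hA.submatrix ![i, j]).det_nonneg
  have hsymm : A j i = A i j := by simpa using hA.isHermitian.apply i j
  simp only [det_fin_two, submatrix_apply, Matrix.cons_val_zero, Matrix.cons_val_one, hsymm] at hdet
  linarith

theorem exists_norm_add_smul_sq_eq {F : Type*} [SeminormedAddCommGroup F] [NormedSpace ℝ F]
    (w c : F) {t : ℝ} (ht : ‖w‖ ^ 2 ≤ t) : ∃ s ∈ Icc 0 t, ‖w + (t - s) • c‖ ^ 2 = s := by
  let f : ℝ → ℝ := fun s ↦ ‖w + (t - s) • c‖ ^ 2 - s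
  have hf : ContinuousOn f (Icc 0 t) := by fun_prop
  have hft : f t ≤ 0 := by simpa [f] using ht
  have hf0 : 0 ≤ f 0 := by simp [f]
  obtain ⟨s, hs, hfs⟩ := intermediate_value_Icc' ((sq_nonneg _).trans ht) hf ⟨hft, hf0⟩
  exact ⟨s, hs, sub_eq_zero.mp hfs⟩

theorem EuclideanSpace.inner_fin_two (x y : EuclideanSpace ℝ (Fin 2)) :
    ⟪x, y⟫ = x 0 * y 0 + x 1 * y 1 := by
  simp [PiLp.inner_apply, Fin.sum_univ_two]
  ring

theorem EuclideanSpace.norm_sq_fin_two (x : EuclideanSpace ℝ (Fin 2)) :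
    ‖x‖ ^ 2 = x 0 ^ 2 + x 1 ^ 2 := by
  simp [EuclideanSpace.real_norm_sq_eq, Fin.sum_univ_two]

def cross (a b : EuclideanSpace ℝ (Fin 2)) : ℝ := a 0 * b 1 - a 1 * b 0

theorem cross_swap_ne_zero {a b : EuclideanSpace ℝ (Fin 2)} (h : cross a b ≠ 0) :
    cross b a ≠ 0 := by
  contrapose! h
  unfold cross at h ⊢
  linarith

theorem exists_inner_eq_of_cross_ne_zero {a b : EuclideanSpace ℝ (Fin 2)} (h : cross a b ≠ 0)
    (α β : ℝ) : ∃ c, ⟪a, c⟫ = α ∧ ⟪b, c⟫ = β := by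
  set d := cross a b with hd
  refine ⟨!₂[(α * b 1 - β * a 1) / d, (β * a 0 - α * b 0) / d], ?_, ?_⟩ <;>
  · simp only [EuclideanSpace.inner_fin_two, Matrix.cons_val_zero, Matrix.cons_val_one]
    field_simp
    rw [hd, cross]
    ring

theorem cross_MP_MQ (E : EuclideanSpace ℝ (Fin 2)) :
    cross ((3 / 2 : ℝ) • E) ((3 / 2 : ℝ) • Jv E) = -(9 / 4) * ‖E‖ ^ 2 := by
  simp [cross, Jv, toE, Jmat, vecHead, vecTail, EuclideanSpace.norm_sq_fin_two]
  ring

theorem cross_MP_MV (E : EuclideanSpace ℝ (Fin 2)) (R X : ℝ) :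
    cross ((3 / 2 : ℝ) • E) ((2 : ℝ) • ZtE R X E) = -3 * X * ‖E‖ ^ 2 := by
  simp [cross, ZtE, toE, Zmat, EuclideanSpace.norm_sq_fin_two]
  ring

theorem cross_MQ_MV (E : EuclideanSpace ℝ (Fin 2)) (R X : ℝ) :
    cross ((3 / 2 : ℝ) • Jv E) ((2 : ℝ) • ZtE R X E) = 3 * R * ‖E‖ ^ 2 := by
  simp [cross, Jv, ZtE, toE, Jmat, Zmat, vecHead, vecTail, EuclideanSpace.norm_sq_fin_two]
  ring

def topRightCol (W : Matrix (Fin 3) (Fin 3) ℝ) : EuclideanSpace ℝ (Fin 2) := !₂[W 0 2, W 1 2]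

theorem trace_Mmat_mul_of_isSymm (α : ℝ) (a : EuclideanSpace ℝ (Fin 2)) (ζ : ℝ)
    {A : Matrix (Fin 3) (Fin 3) ℝ} (hA : A.IsSymm) :
    (Mmat α a ζ * A).trace = α * (A 0 0 + A 1 1) + ⟪a, topRightCol A⟫ + ζ * A 2 2 := by
  rw [trace_fin_three]
  simp only [mul_apply, Fin.sum_univ_three]
  simp [Mmat, topRightCol, EuclideanSpace.inner_fin_two, hA.apply 0 2, hA.apply 1 2]
  ring

theorem norm_topRightCol_sq_le {W : Matrix (Fin 3) (Fin 3) ℝ} (hW : W.PosSemidef)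
    (h22 : W 2 2 = 1) : ‖topRightCol W‖ ^ 2 ≤ W 0 0 + W 1 1 := by
  have h0 := hW.mul_self_apply_le 0 2
  have h1 := hW.mul_self_apply_le 1 2
  rw [h22, mul_one] at h0 h1
  simp only [EuclideanSpace.norm_sq_fin_two, topRightCol, Matrix.cons_val_zero,
    Matrix.cons_val_one]
  linarith [sq (W 0 2), sq (W 1 2)]

def outerLift (u : EuclideanSpace ℝ (Fin 2)) : Matrix (Fin 3) (Fin 3) ℝ :=
  vecMulVec ![u 0, u 1, 1] ![u 0, u 1, 1]

section outerLift

variable (u : EuclideanSpace ℝ (Fin 2))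

theorem posSemidef_outerLift : (outerLift u).PosSemidef := by
  have := posSemidef_vecMulVec_self_star ![u 0, u 1, 1]
  rwa [star_trivial] at this

theorem rank_outerLift_le : (outerLift u).rank ≤ 1 := rank_vecMulVec_le _ _

theorem topRightCol_outerLift : topRightCol (outerLift u) = u := by
  ext i; fin_cases i <;> simp [topRightCol, outerLift]

theorem outerLift_zero_zero_add_one_one : outerLift u 0 0 + outerLift u 1 1 = ‖u‖ ^ 2 := by
  rw [EuclideanSpace.norm_sq_fin_two]
  simp [outerLift, sq]

theorem outerLift_two_two : outerLift u 2 2 = 1 := by simp [outerLift]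

theorem trace_outerLift : (outerLift u).trace = ‖u‖ ^ 2 + 1 := by
  rw [trace_fin_three, outerLift_zero_zero_add_one_one, outerLift_two_two]

end outerLift

/-- Moving trace mass `δ` out of the upper-left block of `W` while adding `δ • c` to its top-right
column leaves `Tr(M W)` unchanged. -/
def TraceBalanced (c : EuclideanSpace ℝ (Fin 2)) (M : Matrix (Fin 3) (Fin 3) ℝ) : Prop :=
  ∃ α a ζ, M = Mmat α a ζ ∧ ⟪a, c⟫ = α

theorem exists_rank_le_one_of_mem_Wset {Imax : ℝ} {W : Matrix (Fin 3) (Fin 3) ℝ}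
    (hW : W ∈ Wset Imax) (c : EuclideanSpace ℝ (Fin 2)) :
    ∃ W' ∈ Wset Imax, W'.rank ≤ 1 ∧ W'.trace ≤ W.trace ∧
      ∀ M, TraceBalanced c M → (M * W').trace = (M * W).trace := by
  obtain ⟨hpsd, hIm, h22⟩ := hW
  set t := W 0 0 + W 1 1
  obtain ⟨s, ⟨-, hst⟩, hs⟩ :=
    exists_norm_add_smul_sq_eq (topRightCol W) c (norm_topRightCol_sq_le hpsd h22)
  set u := topRightCol W + (t - s) • c
  refine ⟨outerLift u, ⟨posSemidef_outerLift u, ?_, outerLift_two_two u⟩, rank_outerLift_le u,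
    ?_, ?_⟩
  · rw [outerLift_zero_zero_add_one_one, hs]
    exact hst.trans hIm
  · rw [trace_outerLift, trace_fin_three, h22, hs]
    linarith
  · rintro M ⟨α, a, ζ, rfl, hα⟩
    have hsymm := isHermitian_iff_isSymm.mp hpsd.isHermitian
    have hsymm' := isHermitian_iff_isSymm.mp (posSemidef_outerLift u).isHermitian
    rw [trace_Mmat_mul_of_isSymm _ _ _ hsymm, trace_Mmat_mul_of_isSymm _ _ _ hsymm',
      outerLift_zero_zero_add_one_one, topRightCol_outerLift, outerLift_two_two, hs, h22,
      inner_add_right, inner_smul_right, hα]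
    ring

theorem exists_traceBalanced_Mmat {a b : EuclideanSpace ℝ (Fin 2)} (h : cross a b ≠ 0)
    (α ζ β η : ℝ) : ∃ c, TraceBalanced c (Mmat α a ζ) ∧ TraceBalanced c (Mmat β b η) := by
  obtain ⟨c, hα, hβ⟩ := exists_inner_eq_of_cross_ne_zero h α β
  exact ⟨c, ⟨α, a, ζ, rfl, hα⟩, ⟨β, b, η, rfl, hβ⟩⟩

theorem exists_traceBalanced_of_mem {E : EuclideanSpace ℝ (Fin 2)} (hE : E ≠ 0) {R X : ℝ}
    (hR : R ≠ 0) (hX : X ≠ 0) {M₁ M₂ : Matrix (Fin 3) (Fin 3) ℝ}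
    (hM₁ : M₁ ∈ ({MP E R, MQ E X, MV E R X} : Set (Matrix (Fin 3) (Fin 3) ℝ)))
    (hM₂ : M₂ ∈ ({MP E R, MQ E X, MV E R X} : Set (Matrix (Fin 3) (Fin 3) ℝ)))
    (hMne : M₁ ≠ M₂) : ∃ c, TraceBalanced c M₁ ∧ TraceBalanced c M₂ := by
  have hPQ : cross ((3 / 2 : ℝ) • E) ((3 / 2 : ℝ) • Jv E) ≠ 0 := by simp [cross_MP_MQ, hE]
  have hPV : cross ((3 / 2 : ℝ) • E) ((2 : ℝ) • ZtE R X E) ≠ 0 := by simp [cross_MP_MV, hE, hX]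
  have hQV : cross ((3 / 2 : ℝ) • Jv E) ((2 : ℝ) • ZtE R X E) ≠ 0 := by
    simp [cross_MQ_MV, hE, hR]
  simp only [Set.mem_insert_iff, Set.mem_singleton_iff] at hM₁ hM₂
  rcases hM₁ with rfl | rfl | rfl <;> rcases hM₂ with rfl | rfl | rfl <;>
    first
    | exact absurd rfl hMne
    | exact exists_traceBalanced_Mmat (by assumption) _ _ _ _
    | exact exists_traceBalanced_Mmat (cross_swap_ne_zero (by assumption)) _ _ _ _

theorem stmt13 (E : EuclideanSpace ℝ (Fin 2)) (hE : E ≠ 0) (R X : ℝ)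
    (hR : R ≠ 0) (hX : X ≠ 0) (Imax : ℝ)
    (M₁ M₂ : Matrix (Fin 3) (Fin 3) ℝ)
    (hM₁ : M₁ ∈ ({MP E R, MQ E X, MV E R X} : Set (Matrix (Fin 3) (Fin 3) ℝ)))
    (hM₂ : M₂ ∈ ({MP E R, MQ E X, MV E R X} : Set (Matrix (Fin 3) (Fin 3) ℝ)))
    (hMne : M₁ ≠ M₂)
    (W : Matrix (Fin 3) (Fin 3) ℝ) (hW : W ∈ Wset Imax) :
    ∃ W' ∈ Wset Imax, W'.rank ≤ 1 ∧
      (M₁ * W').trace = (M₁ * W).trace ∧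
      (M₂ * W').trace = (M₂ * W).trace ∧
      W'.trace ≤ W.trace := by
  obtain ⟨c, hc₁, hc₂⟩ := exists_traceBalanced_of_mem hE hR hX hM₁ hM₂ hMne
  obtain ⟨W', hW', hrank, htrace, hbal⟩ := exists_rank_le_one_of_mem_Wset hW c
  exact ⟨W', hW', hrank, hbal M₁ hc₁, hbal M₂ hc₂, htrace⟩
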